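/- Let n ≥ 1 and let W_n be the n-uplinked mutual dyad over a field F. Then the dimension-1 path homology of W_n is trivial: H_1(W_n) = 0, i.e., ker ∂_1 = im ∂_2. -/

import Mathlib

open Finset

/-- The non-regular boundary operator `∂_[p] : R^{V^{p+1}} → R^{V^p}`.
It is the linear map acting on the standard basis by
`∂_[p] e_{(v_0,…,v_p)} = ∑_{j=0}^p (−1)^j e_{(v_0,…,v̂_j,…,v_p)}`,
where `v̂_j` means that the entry `v_j` is omitted from the tuple
(here `fun i => x (j.succAbove i)` is the tuple `x` with its `j`-th entry dropped). -/
noncomputable def pathBoundary (R V : Type) [CommRing R] [Fintype V] [DecidableEq V]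
    (p : ℕ) : ((Fin (p + 1) → V) → R) →ₗ[R] ((Fin p → V) → R) where
  toFun f := fun w => ∑ x : Fin (p + 1) → V,
    (∑ j : Fin (p + 1), (-1 : R) ^ (j : ℕ) *
      (if (fun i => x (j.succAbove i)) = w then 1 else 0)) * f x
  map_add' f g := by
    funext w
    simp [mul_add, Finset.sum_add_distrib]
  map_smul' r f := by
    funext w
    simp [Finset.mul_sum, mul_left_comm]

/-- A tuple of vertices is an allowed path when each consecutive pair is an arc. -/
def IsAllowed {V : Type} (A : V → V → Prop) {q : ℕ} (x : Fin q → V) : Prop :=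
  ∀ (i : ℕ) (h : i + 1 < q), A (x ⟨i, Nat.lt_of_succ_lt h⟩) (x ⟨i + 1, h⟩)

/-- `R^{𝒜}`: the subspace of `R^{V^q}` of functions supported on allowed paths
(`q` is the number of vertices in the tuple, so this is `R^{𝒜_{q-1}}`). -/
def allowedSubmodule (R V : Type) [CommRing R] (A : V → V → Prop) (q : ℕ) :
    Submodule R ((Fin q → V) → R) where
  carrier := {f | ∀ x, ¬ IsAllowed A x → f x = 0}
  add_mem' := fun hf hg x hx => by simp only [Pi.add_apply, hf x hx, hg x hx, add_zero]
  zero_mem' := fun x hx => rfl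
  smul_mem' := fun c f hf x hx => by simp only [Pi.smul_apply, hf x hx, smul_zero]

/-- `Ω_p`, the space of invariant `p`-paths:
`Ω_p = {ω ∈ R^{𝒜_p} : ∂_[p] ω ∈ R^{𝒜_{p−1}}}`. -/
noncomputable def invariantPaths (R V : Type) [CommRing R] [Fintype V] [DecidableEq V]
    (A : V → V → Prop) (p : ℕ) : Submodule R ((Fin (p + 1) → V) → R) :=
  allowedSubmodule R V A (p + 1) ⊓ (allowedSubmodule R V A p).comap (pathBoundary R V p)

/-- The cycles `Z_p = ker ∂_p` of the path complex `(Ω_p, ∂_p)`, `∂_p = ∂_[p]|_{Ω_p}`.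
In degree `0` the complex ends at `Ω_0` (the differential out of `Ω_0` is zero),
so `Z_0 = Ω_0`. -/
noncomputable def pathCycles (R V : Type) [CommRing R] [Fintype V] [DecidableEq V]
    (A : V → V → Prop) : (p : ℕ) → Submodule R ((Fin (p + 1) → V) → R)
  | 0 => invariantPaths R V A 0
  | p + 1 => invariantPaths R V A (p + 1) ⊓ LinearMap.ker (pathBoundary R V (p + 1))

/-- The boundaries `B_p = im ∂_{p+1} = ∂_[p+1](Ω_{p+1})`. -/
noncomputable def pathBoundaries (R V : Type) [CommRing R] [Fintype V] [DecidableEq V]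
    (A : V → V → Prop) (p : ℕ) : Submodule R ((Fin (p + 1) → V) → R) :=
  Submodule.map (pathBoundary R V (p + 1)) (invariantPaths R V A (p + 1))

/-- The path homology `H_p = Z_p / B_p` of the digraph `(V, A)` with coefficients in `R`. -/
abbrev pathHomology (R V : Type) [CommRing R] [Fintype V] [DecidableEq V]
    (A : V → V → Prop) (p : ℕ) : Type :=
  pathCycles R V A p ⧸ (pathBoundaries R V A p).comap (pathCycles R V A p).subtype

/-- The Betti numbers `β_p = dim H_p`. -/
noncomputable def betti (F V : Type) [Field F] [Fintype V] [DecidableEq V]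
    (A : V → V → Prop) (p : ℕ) : ℕ :=
  Module.finrank F (pathHomology F V A p)

/-- The reduced Betti numbers `β̃_p = β_p − δ_{p0}` (as integers). -/
noncomputable def tildeBetti (F V : Type) [Field F] [Fintype V] [DecidableEq V]
    (A : V → V → Prop) (p : ℕ) : ℤ :=
  (betti F V A p : ℤ) - (if p = 0 then 1 else 0)

/-- For `n ≥ 1`, the `n`-uplinked mutual dyad `W_n` has vertex set `{a, b, 1, …, n}`
(realized as `Fin 2 ⊕ Fin n`, with `a = Sum.inl 0` and `b = Sum.inl 1`) and arc set
`{(a,b), (b,a)} ∪ {(a,i) : 1 ≤ i ≤ n} ∪ {(b,i) : 1 ≤ i ≤ n}`. -/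
def uplinkArc (n : ℕ) : (Fin 2 ⊕ Fin n) → (Fin 2 ⊕ Fin n) → Prop
  | Sum.inl i, Sum.inl j => i ≠ j
  | Sum.inl _, Sum.inr _ => True
  | Sum.inr _, _ => False

/-- The `n`-downlinked mutual dyad: the `n`-uplinked mutual dyad with all arcs reversed. -/
def downlinkArc (n : ℕ) (u v : Fin 2 ⊕ Fin n) : Prop := uplinkArc n v u

/-!
In `W_n` every allowed 2-path `a → b → i` or `b → a → i` spans a triangle (`a → i` and
`b → i` are arcs), so it is an invariant 2-path with boundary `(b,i) − (a,i) + (a,b)`,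
resp. `(a,i) − (b,i) + (b,a)`. Flow conservation of a 1-cycle `f` at the sink `i` and at `a`
gives `f(b,i) = −f(a,i)` and `f(b,a) = f(a,b) + ∑ᵢ f(a,i)`, hence
`f = f(a,b) • ∂(abi₀ + bai₀) + ∑ᵢ f(a,i) • ∂(bai)` for any sink `i₀`.
-/

section PathBoundary

variable {R V : Type} [CommRing R] [Fintype V] [DecidableEq V]

theorem pathBoundary_single (p : ℕ) (x : Fin (p + 1) → V) :
    pathBoundary R V p (Pi.single x 1) =
      ∑ j : Fin (p + 1), (-1 : R) ^ (j : ℕ) • Pi.single (x ∘ j.succAbove) 1 := by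
  ext w
  simp [pathBoundary, Pi.single_apply, eq_comm, Function.comp_def]

theorem pathBoundary_single_two (u v : V) :
    pathBoundary R V 1 (Pi.single ![u, v] 1) = Pi.single ![v] 1 - Pi.single ![u] 1 := by
  have h0 : ![u, v] ∘ (0 : Fin 2).succAbove = ![v] := by ext i; fin_cases i; rfl
  have h1 : ![u, v] ∘ (1 : Fin 2).succAbove = ![u] := by ext i; fin_cases i; rfl
  rw [pathBoundary_single, Fin.sum_univ_two, h0, h1]
  simp [sub_eq_add_neg]

theorem pathBoundary_single_three (u v w : V) :
    pathBoundary R V 2 (Pi.single ![u, v, w] 1) =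
      Pi.single ![v, w] 1 - Pi.single ![u, w] 1 + Pi.single ![u, v] 1 := by
  have h0 : ![u, v, w] ∘ (0 : Fin 3).succAbove = ![v, w] := by ext i; fin_cases i <;> rfl
  have h1 : ![u, v, w] ∘ (1 : Fin 3).succAbove = ![u, w] := by ext i; fin_cases i <;> rfl
  have h2 : ![u, v, w] ∘ (2 : Fin 3).succAbove = ![u, v] := by ext i; fin_cases i <;> rfl
  rw [pathBoundary_single, Fin.sum_univ_three, h0, h1, h2]
  simp [sub_eq_add_neg]

theorem pathBoundary_one_apply (f : (Fin 2 → V) → R) (u : V) :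
    pathBoundary R V 1 f ![u] = ∑ v, f ![v, u] - ∑ v, f ![u, v] := by
  simp only [pathBoundary, LinearMap.coe_mk, AddHom.coe_mk]
  rw [← (finTwoArrowEquiv V).symm.sum_comp, Fintype.sum_prod_type]
  simp [Matrix.vec_single_eq_const, funext_iff, add_mul, Finset.sum_add_distrib, sub_eq_add_neg]

theorem sum_in_eq_sum_out_of_pathBoundary_eq_zero {f : (Fin 2 → V) → R}
    (hf : pathBoundary R V 1 f = 0) (u : V) : ∑ v, f ![v, u] = ∑ v, f ![u, v] :=
  sub_eq_zero.1 ((pathBoundary_one_apply f u).symm.trans (congr_fun hf ![u]))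

theorem pathBoundary_one_comp_pathBoundary_two :
    (pathBoundary R V 1).comp (pathBoundary R V 2) = 0 := by
  refine (Pi.basisFun R (Fin 3 → V)).ext fun x => ?_
  have hx : x = ![x 0, x 1, x 2] := by ext i; fin_cases i <;> rfl
  rw [Pi.basisFun_apply, hx, LinearMap.comp_apply, pathBoundary_single_three]
  simp only [map_add, map_sub, pathBoundary_single_two, LinearMap.zero_apply]
  abel

end PathBoundary

section Allowed

variable {V : Type} {A : V → V → Prop}

theorem isAllowed_vec_two {u v : V} : IsAllowed A ![u, v] ↔ A u v := by
  refine ⟨fun h => h 0 one_lt_two, fun h i hi => ?_⟩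
  obtain rfl : i = 0 := by omega
  exact h

theorem isAllowed_vec_three {u v w : V} : IsAllowed A ![u, v, w] ↔ A u v ∧ A v w := by
  refine ⟨fun h => ⟨by exact h 0 (by decide), by exact h 1 (by decide)⟩,
    fun ⟨huv, hvw⟩ i hi => ?_⟩
  obtain rfl | rfl : i = 0 ∨ i = 1 := by omega
  exacts [huv, hvw]

theorem single_mem_allowedSubmodule {R : Type} [CommRing R] [DecidableEq V] {q : ℕ}
    {x : Fin q → V} (hx : IsAllowed A x) (r : R) :
    Pi.single x r ∈ allowedSubmodule R V A q := by
  intro y hy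
  rw [Pi.single_apply, if_neg]
  rintro rfl
  exact hy hx

theorem apply_vec_two_eq_zero_of_not {R : Type} [CommRing R] {f : (Fin 2 → V) → R}
    (hf : f ∈ allowedSubmodule R V A 2) {u v : V} (huv : ¬ A u v) : f ![u, v] = 0 :=
  hf _ (mt isAllowed_vec_two.1 huv)

end Allowed

section PathHomology

variable {R V : Type} [CommRing R] [Fintype V] [DecidableEq V] {A : V → V → Prop}

theorem single_mem_invariantPaths_two {u v w : V} (huv : A u v) (hvw : A v w) (huw : A u w) :
    Pi.single ![u, v, w] (1 : R) ∈ invariantPaths R V A 2 := by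
  have hedge {x y : V} (h : A x y) : Pi.single ![x, y] (1 : R) ∈ allowedSubmodule R V A 2 :=
    single_mem_allowedSubmodule (isAllowed_vec_two.2 h) 1
  refine Submodule.mem_inf.2
    ⟨single_mem_allowedSubmodule (isAllowed_vec_three.2 ⟨huv, hvw⟩) 1, ?_⟩
  rw [Submodule.mem_comap, pathBoundary_single_three]
  exact add_mem (sub_mem (hedge hvw) (hedge huw)) (hedge huv)

theorem triangle_mem_pathBoundaries {u v w : V} (huv : A u v) (hvw : A v w) (huw : A u w) :
    (Pi.single ![v, w] 1 - Pi.single ![u, w] 1 + Pi.single ![u, v] 1 : (Fin 2 → V) → R)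
      ∈ pathBoundaries R V A 1 :=
  ⟨_, single_mem_invariantPaths_two huv hvw huw, pathBoundary_single_three u v w⟩

theorem pathBoundaries_one_le_pathCycles_one : pathBoundaries R V A 1 ≤ pathCycles R V A 1 := by
  rintro _ ⟨g, ⟨-, hg⟩, rfl⟩
  have hzero : pathBoundary R V 1 (pathBoundary R V 2 g) = 0 :=
    LinearMap.congr_fun pathBoundary_one_comp_pathBoundary_two g
  exact ⟨Submodule.mem_inf.2 ⟨hg, Submodule.mem_comap.2 (hzero ▸ zero_mem _)⟩, hzero⟩

theorem subsingleton_pathHomology_iff (p : ℕ) :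
    Subsingleton (pathHomology R V A p) ↔ pathCycles R V A p ≤ pathBoundaries R V A p := by
  rw [Submodule.Quotient.subsingleton_iff, Submodule.comap_subtype_eq_top]

end PathHomology

section UplinkedDyad

open Sum

variable {R : Type} [CommRing R] {n : ℕ}

theorem uplinkArc_chain_inr_apply {f : (Fin 2 → Fin 2 ⊕ Fin n) → R}
    (hf : f ∈ allowedSubmodule R _ (uplinkArc n) 2) (i : Fin n) (v : Fin 2 ⊕ Fin n) :
    f ![inr i, v] = 0 :=
  apply_vec_two_eq_zero_of_not hf (by cases v <;> exact id)

theorem uplinkArc_chain_inl_inl_self {f : (Fin 2 → Fin 2 ⊕ Fin n) → R}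
    (hf : f ∈ allowedSubmodule R _ (uplinkArc n) 2) (j : Fin 2) : f ![inl j, inl j] = 0 :=
  apply_vec_two_eq_zero_of_not hf fun h => h rfl

theorem uplinkArc_chain_eq {f : (Fin 2 → Fin 2 ⊕ Fin n) → R}
    (hf : f ∈ allowedSubmodule R _ (uplinkArc n) 2) :
    f = f ![inl 0, inl 1] • Pi.single ![inl 0, inl 1] 1
      + f ![inl 1, inl 0] • Pi.single ![inl 1, inl 0] 1
      + ∑ i, (f ![inl 0, inr i] • Pi.single ![inl 0, inr i] 1
        + f ![inl 1, inr i] • Pi.single ![inl 1, inr i] 1) := by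
  conv_lhs => rw [pi_eq_sum_univ' f, ← (finTwoArrowEquiv _).symm.sum_comp]
  simp only [finTwoArrowEquiv_symm_apply, Fintype.sum_prod_type, Fintype.sum_sum_type,
    Fin.sum_univ_two, Finset.sum_add_distrib, uplinkArc_chain_inl_inl_self hf,
    uplinkArc_chain_inr_apply hf, zero_smul, zero_add, Finset.sum_const_zero, add_zero]
  abel

theorem uplinkArc_pathCycles_one_le_pathBoundaries (hn : 1 ≤ n) :
    pathCycles R _ (uplinkArc n) 1 ≤ pathBoundaries R _ (uplinkArc n) 1 := by
  intro f hf
  obtain ⟨hΩ, hker⟩ := Submodule.mem_inf.1 hf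
  have hfA : f ∈ allowedSubmodule R _ (uplinkArc n) 2 := (Submodule.mem_inf.1 hΩ).1
  have hflow := sum_in_eq_sum_out_of_pathBoundary_eq_zero (LinearMap.mem_ker.1 hker)
  have hleaf (i : Fin n) : f ![inl 1, inr i] = -f ![inl 0, inr i] :=
    eq_neg_of_add_eq_zero_right <| by
      simpa [Fintype.sum_sum_type, uplinkArc_chain_inr_apply hfA] using hflow (inr i)
  have hba : f ![inl 1, inl 0] = f ![inl 0, inl 1] + ∑ i, f ![inl 0, inr i] := by
    simpa [Fintype.sum_sum_type, uplinkArc_chain_inr_apply hfA,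
      uplinkArc_chain_inl_inl_self hfA] using hflow (inl 0)
  have hf_eq : f = f ![inl 0, inl 1] • (Pi.single ![inl 0, inl 1] 1 + Pi.single ![inl 1, inl 0] 1)
      + ∑ i, f ![inl 0, inr i] • (Pi.single ![inl 0, inr i] 1 - Pi.single ![inl 1, inr i] 1
        + Pi.single ![inl 1, inl 0] 1) := by
    conv_lhs => rw [uplinkArc_chain_eq hfA]
    simp only [hba, hleaf, add_smul, neg_smul, smul_add, smul_sub, Finset.sum_add_distrib,
      Finset.sum_neg_distrib, Finset.sum_sub_distrib, Finset.sum_smul]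
    abel
  rw [hf_eq]
  refine add_mem (Submodule.smul_mem _ _ ?_)
    (Submodule.sum_mem _ fun i _ => Submodule.smul_mem _ _ ?_)
  · let i₀ : Fin n := ⟨0, hn⟩
    have habi := triangle_mem_pathBoundaries (R := R) (A := uplinkArc n)
      (u := inl 0) (v := inl 1) (w := inr i₀) zero_ne_one trivial trivial
    have hbai := triangle_mem_pathBoundaries (R := R) (A := uplinkArc n)
      (u := inl 1) (v := inl 0) (w := inr i₀) one_ne_zero trivial trivial
    convert add_mem habi hbai using 1
    abel
  · exact triangle_mem_pathBoundaries one_ne_zero trivial trivial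

end UplinkedDyad

/-- For `n ≥ 1` and `W_n` the `n`-uplinked mutual dyad over a field `F`,
the dimension-1 path homology of `W_n` is trivial: `H_1(W_n) = 0`, i.e.
`ker ∂_1 = im ∂_2`. -/
theorem uplinked_dyad_H1_trivial (F : Type) [Field F] (n : ℕ) (hn : 1 ≤ n) :
    invariantPaths F (Fin 2 ⊕ Fin n) (uplinkArc n) 1
          ⊓ LinearMap.ker (pathBoundary F (Fin 2 ⊕ Fin n) 1)
        = pathBoundaries F (Fin 2 ⊕ Fin n) (uplinkArc n) 1
    ∧ Subsingleton (pathHomology F (Fin 2 ⊕ Fin n) (uplinkArc n) 1) := by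
  have hZB : pathCycles F _ (uplinkArc n) 1 = pathBoundaries F _ (uplinkArc n) 1 :=
    le_antisymm (uplinkArc_pathCycles_one_le_pathBoundaries hn)
      pathBoundaries_one_le_pathCycles_one
  exact ⟨hZB, (subsingleton_pathHomology_iff 1).2 hZB.le⟩
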